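/- Fix β > 0 and G > 0, and let μ be a finite measure on (0,∞). Define g(x) = (∫₀^G ∫ y^β e^{-v(x+y+1)/2} dμ(v) dy)/(∫ e^{-v(x+G+1)/2} dμ(v)) for x ≥ 0, assuming the denominator is positive. Then g is non-increasing in x, i.e., for 0 ≤ x₁ ≤ x₂ we have g(x₂) ≤ g(x₁). -/

import Mathlib

/-!
With `L(s) = ∫ e^{-v s} dμ(v)` the Laplace transform of `μ`,
`g(x) = ∫₀^G y^β L((x+y+1)/2) dy / L((x+G+1)/2)`, so it suffices that for each `y ≤ G` the ratio
`L((x+y+1)/2) / L((x+G+1)/2)` is non-increasing in `x`. That is log-convexity of `L`: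
`L(A+δ) L(B) ≤ L(A) L(B+δ)` for `A ≤ B`, `δ ≥ 0`. Under the weight `e^{-vA} dμ(v)` this is a
Chebyshev correlation inequality, since `e^{-vδ}` and `e^{-v(B-A)}` are both non-increasing in `v`.
-/

open MeasureTheory Set

/-- Symmetrisation: the pointwise hypothesis makes `∫∫ (p a q b - p b q a)(h a - h b) dμ dμ ≤ 0`,
and this double integral equals `2 ((∫ p h)(∫ q) - (∫ p)(∫ q h))`. -/
theorem integral_mul_mul_integral_le {α : Type*} [MeasurableSpace α] {μ : Measure α}
    {p q h : α → ℝ} (hp : Integrable p μ) (hq : Integrable q μ)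
    (hph : Integrable (fun a ↦ p a * h a) μ) (hqh : Integrable (fun a ↦ q a * h a) μ)
    (hpqh : ∀ a b, (p a * q b - p b * q a) * (h a - h b) ≤ 0) :
    (∫ a, p a * h a ∂μ) * ∫ a, q a ∂μ ≤ (∫ a, p a ∂μ) * ∫ a, q a * h a ∂μ := by
  set P := ∫ a, p a ∂μ
  set Q := ∫ a, q a ∂μ
  set Ph := ∫ a, p a * h a ∂μ
  set Qh := ∫ a, q a * h a ∂μ
  have hinner : ∀ a, ∫ b, (p a * q b - p b * q a) * (h a - h b) ∂μ =
      p a * h a * Q - p a * Qh - q a * h a * P + q a * Ph := by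
    intro a
    have hexpand : (fun b ↦ (p a * q b - p b * q a) * (h a - h b)) = fun b ↦
        p a * h a * q b - p a * (q b * h b) - q a * h a * p b + q a * (p b * h b) := by
      ext b; ring
    rw [hexpand, integral_add, integral_sub, integral_sub, integral_const_mul, integral_const_mul,
      integral_const_mul, integral_const_mul] <;> fun_prop
  have houter : ∫ a, ∫ b, (p a * q b - p b * q a) * (h a - h b) ∂μ ∂μ = 2 * (Ph * Q - P * Qh) := by
    simp_rw [hinner]
    rw [integral_add, integral_sub, integral_sub]
    · simp only [integral_mul_const]
      ring
    all_goals fun_prop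
  have hnonpos : ∫ a, ∫ b, (p a * q b - p b * q a) * (h a - h b) ∂μ ∂μ ≤ 0 :=
    integral_nonpos fun a ↦ integral_nonpos fun b ↦ hpqh a b
  linarith

noncomputable def laplace (μ : Measure ℝ) (s : ℝ) : ℝ := ∫ v, Real.exp (-v * s) ∂μ

section Laplace

variable {μ : Measure ℝ} [IsFiniteMeasure μ]

lemma integrable_exp_neg_mul (hμ : ∀ᵐ v ∂μ, 0 ≤ v) {s : ℝ} (hs : 0 ≤ s) :
    Integrable (fun v ↦ Real.exp (-v * s)) μ := by
  refine (integrable_const 1).mono' (by fun_prop) ?_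
  filter_upwards [hμ] with v hv
  rw [Real.norm_of_nonneg (Real.exp_pos _).le, Real.exp_le_one_iff, neg_mul, neg_nonpos]
  exact mul_nonneg hv hs

lemma laplace_antitoneOn (hμ : ∀ᵐ v ∂μ, 0 ≤ v) : AntitoneOn (laplace μ) (Ici 0) := by
  intro s hs t _ hst
  refine integral_mono_of_nonneg (.of_forall fun v ↦ (Real.exp_pos _).le)
    (integrable_exp_neg_mul hμ hs) ?_
  filter_upwards [hμ] with v hv
  exact Real.exp_le_exp.2 (by nlinarith)

lemma laplace_add_mul_le (hμ : ∀ᵐ v ∂μ, 0 ≤ v) {A B δ : ℝ} (hA : 0 ≤ A) (hAB : A ≤ B)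
    (hδ : 0 ≤ δ) : laplace μ (A + δ) * laplace μ B ≤ laplace μ A * laplace μ (B + δ) := by
  have hB : 0 ≤ B := hA.trans hAB
  simp only [laplace, mul_add, Real.exp_add]
  refine integral_mul_mul_integral_le (integrable_exp_neg_mul hμ hA) (integrable_exp_neg_mul hμ hB)
    ?_ ?_ fun a b ↦ ?_
  · simpa only [← Real.exp_add, ← mul_add] using integrable_exp_neg_mul hμ (add_nonneg hA hδ)
  · simpa only [← Real.exp_add, ← mul_add] using integrable_exp_neg_mul hμ (add_nonneg hB hδ)
  simp only [← Real.exp_add]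
  rcases le_total a b with hab | hab
  · refine mul_nonpos_of_nonpos_of_nonneg (sub_nonpos.2 ?_) (sub_nonneg.2 ?_) <;>
      exact Real.exp_le_exp.2 (by nlinarith)
  · refine mul_nonpos_of_nonneg_of_nonpos (sub_nonneg.2 ?_) (sub_nonpos.2 ?_) <;>
      exact Real.exp_le_exp.2 (by nlinarith)

end Laplace

theorem stmt_17 (β G : ℝ) (hβ : 0 < β) (hG : 0 < G)
    (μ : Measure ℝ) [IsFiniteMeasure μ] (hsupp : μ (Iic 0) = 0)
    (g : ℝ → ℝ)
    (hg : ∀ x ≥ 0, g x =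
      (∫ y in (0:ℝ)..G, ∫ v, y ^ β * Real.exp (-v * (x + y + 1) / 2) ∂μ) /
      (∫ v, Real.exp (-v * (x + G + 1) / 2) ∂μ))
    (hden : ∀ x ≥ 0, 0 < ∫ v, Real.exp (-v * (x + G + 1) / 2) ∂μ) :
    ∀ x₁ x₂ : ℝ, 0 ≤ x₁ → x₁ ≤ x₂ → g x₂ ≤ g x₁ := by
  intro x₁ x₂ hx₁ hx₁₂
  have hx₂ : 0 ≤ x₂ := hx₁.trans hx₁₂
  have hμ : ∀ᵐ v ∂μ, 0 ≤ v := ae_iff.2 (measure_mono_null (fun v hv ↦ le_of_not_ge hv) hsupp)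
  have hint : ∀ x ≥ 0,
      IntervalIntegrable (fun y ↦ y ^ β * laplace μ ((x + y + 1) / 2)) volume 0 G := by
    intro x hx
    refine .continuousOn_mul (AntitoneOn.intervalIntegrable fun a ha b hb hab ↦ ?_)
      (Real.continuous_rpow_const hβ.le).continuousOn
    rw [uIcc_of_le hG.le] at ha hb
    exact laplace_antitoneOn hμ (mem_Ici.2 (by linarith [ha.1]))
      (mem_Ici.2 (by linarith [hb.1])) (by linarith)
  simp only [mul_div_assoc, integral_const_mul] at hg hden
  rw [hg x₂ hx₂, hg x₁ hx₁, div_le_div_iff₀ (hden x₂ hx₂) (hden x₁ hx₁),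
    ← intervalIntegral.integral_mul_const, ← intervalIntegral.integral_mul_const]
  refine intervalIntegral.integral_mono_on hG.le ((hint x₂ hx₂).mul_const _)
    ((hint x₁ hx₁).mul_const _) fun y ⟨hy, hyG⟩ ↦ ?_
  have key := laplace_add_mul_le hμ (A := (x₁ + y + 1) / 2) (B := (x₁ + G + 1) / 2)
    (δ := (x₂ - x₁) / 2) (by positivity) (by linarith) (by linarith)
  rw [show (x₁ + y + 1) / 2 + (x₂ - x₁) / 2 = (x₂ + y + 1) / 2 by ring,
    show (x₁ + G + 1) / 2 + (x₂ - x₁) / 2 = (x₂ + G + 1) / 2 by ring] at key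
  simpa only [mul_assoc, laplace] using mul_le_mul_of_nonneg_left key (Real.rpow_nonneg hy β)
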